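/- (TDI of the clique constraint system of a perfect graph) Let G = (V,E) be a finite perfect graph and let w : V → ℕ be integral vertex weights. Then there exists an integer-valued nonnegative function y on the nonempty cliques of G with Σ_{Q : v ∈ Q} y_Q ≥ w(v) for every v ∈ V and Σ_Q y_Q = worth(G), where worth(G) is the maximum of Σ_{v ∈ S} w(v) over stable sets S of G. -/

import Mathlib

open scoped Classical

def IsStableSet {V : Type*} (G : SimpleGraph V) (S : Set V) : Prop :=
  S.Pairwise fun u v => ¬ G.Adj u v

def IsPerfect {V : Type*} (G : SimpleGraph V) : Prop :=
  ∀ T : Set V, (G.induce T).chromaticNumber = ((G.induce T).cliqueNum : ℕ∞)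

/-- `worth(G)` for integral weights: the maximum weight of a stable set, in `ℕ`. -/
noncomputable def stableWorthNat {V : Type*} [Fintype V] (G : SimpleGraph V) (w : V → ℕ) : ℕ :=
  sSup {x : ℕ | ∃ S : Finset V, IsStableSet G (↑S : Set V) ∧ x = ∑ v ∈ S, w v}

noncomputable def cliquesOf {V : Type*} [Fintype V] (G : SimpleGraph V) : Finset (Finset V) :=
  Finset.univ.filter fun Q => Q.Nonempty ∧ G.IsClique (↑Q : Set V)


/-!
Any admissible `y` has total at least the weight of every stable set, so it suffices to find one of
total `worth(G)`. Read as a multiset of cliques, such a `y` is a colouring of the complement `Gᶜ`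
in which every vertex `v` receives `w v` colours, using as many colours as the maximum `w`-weight of
a clique of `Gᶜ`. Perfect graphs admit such weighted colourings (Lovász's replication argument, by
induction on the total weight), and `Gᶜ` is perfect by the weak perfect graph theorem, which follows
from the existence, in a perfect graph, of a clique meeting every maximum stable set.
-/

open Finset

lemma Multiset.sum_countP_mem_eq_sum_card_inter {V : Type*} [DecidableEq V]
    (𝒮 : Multiset (Finset V)) (Q : Finset V) :
    ∑ v ∈ Q, 𝒮.countP (v ∈ ·) = (𝒮.map fun S => #(Q ∩ S)).sum := by
  induction 𝒮 using Multiset.induction with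
  | empty => simp
  | cons A 𝒮 ih =>
    simp only [Multiset.countP_cons, sum_add_distrib, ih, sum_boole, filter_mem_eq_inter,
      Multiset.map_cons, Multiset.sum_cons, Nat.cast_id]
    ring

lemma Multiset.sum_filter_count_eq_countP {α : Type*} [DecidableEq α] {m : Multiset α}
    {F : Finset α} (hm : ∀ a ∈ m, a ∈ F) (p : α → Prop) [DecidablePred p] :
    ∑ a ∈ F with p a, m.count a = m.countP p := by
  simp_rw [sum_filter, ← Multiset.count_filter, Multiset.countP_eq_card_filter]
  exact Multiset.sum_count_eq_card fun a ha => hm a (Multiset.mem_of_mem_filter ha)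

section SubIteMem

variable {V : Type*} [DecidableEq V] {h : V → ℕ} {A : Finset V}

lemma ite_mem_le_of_forall_mem_one_le (hA : ∀ v ∈ A, 1 ≤ h v) (v : V) :
    (if v ∈ A then 1 else 0) ≤ h v := by
  split_ifs with hv
  exacts [hA v hv, Nat.zero_le _]

lemma sum_sub_ite_mem_add_card_inter (hA : ∀ v ∈ A, 1 ≤ h v) (Q : Finset V) :
    ∑ v ∈ Q, (h v - if v ∈ A then 1 else 0) + #(Q ∩ A) = ∑ v ∈ Q, h v := by
  rw [← filter_mem_eq_inter, card_filter, ← sum_add_distrib]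
  exact sum_congr rfl fun v _ => Nat.sub_add_cancel (ite_mem_le_of_forall_mem_one_le hA v)

lemma sum_sub_ite_mem_lt [Fintype V] (hA : ∀ v ∈ A, 1 ≤ h v) (hne : A.Nonempty) :
    ∑ v, (h v - if v ∈ A then 1 else 0) < ∑ v, h v := by
  have := sum_sub_ite_mem_add_card_inter hA univ
  rw [univ_inter] at this
  have := hne.card_pos
  omega

end SubIteMem

namespace SimpleGraph

variable {V W : Type*} {G : SimpleGraph V}

lemma IsClique.card_inter_le_one {Q S : Finset V} (hQ : G.IsClique (Q : Set V))
    (hS : G.IsIndepSet (S : Set V)) : #(Q ∩ S) ≤ 1 := by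
  refine card_le_one.mpr fun a ha b hb => by_contra fun hab => ?_
  rw [mem_inter] at ha hb
  exact hS ha.2 hb.2 hab (hQ ha.1 hb.1 hab)

lemma Embedding.cliqueNum_le [Finite W] {H : SimpleGraph W} (f : G ↪g H) :
    G.cliqueNum ≤ H.cliqueNum := by
  obtain ⟨s, hs⟩ := G.exists_isNClique_cliqueNum
  have hclique : H.IsClique (s.map f.toEmbedding : Set W) := by
    intro a ha b hb hab
    simp only [coe_map, Set.mem_image, mem_coe] at ha hb
    obtain ⟨a, ha, rfl⟩ := ha
    obtain ⟨b, hb, rfl⟩ := hb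
    exact f.map_adj_iff.mpr (hs.isClique ha hb (ne_of_apply_ne _ hab))
  simpa [hs.card_eq] using hclique.card_le_cliqueNum

lemma Iso.cliqueNum_eq [Finite V] [Finite W] {H : SimpleGraph W} (f : G ≃g H) :
    G.cliqueNum = H.cliqueNum :=
  le_antisymm f.toEmbedding.cliqueNum_le f.symm.toEmbedding.cliqueNum_le

lemma induce_compl (s : Set V) : Gᶜ.induce s = (G.induce s)ᶜ := by
  ext a b
  simp [Subtype.ext_iff]

lemma colorable_succ_of_isIndepSet {s : Set V} {n : ℕ} (hs : G.IsIndepSet s)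
    (hc : (G.induce sᶜ).Colorable n) : G.Colorable (n + 1) := by
  obtain ⟨C⟩ := hc
  let C' : G.Coloring (Option (Fin n)) :=
    Coloring.mk (fun v => if hv : v ∈ s then none else some (C ⟨v, hv⟩)) fun {a b} hab => by
      by_cases ha : a ∈ s <;> by_cases hb : b ∈ s
      · exact absurd hab (hs ha hb hab.ne)
      all_goals simp only [ha, hb, dif_pos, dif_neg, not_false_eq_true, ne_eq, reduceCtorEq,
        Option.some.injEq]
      exact C.valid hab
  simpa using C'.colorable

lemma indepNum_induce_compl_lt [Finite V] {Q : Finset V}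
    (hQ : ∀ S : Finset V, G.IsNIndepSet G.indepNum S → (Q ∩ S).Nonempty) :
    (G.induce (Q : Set V)ᶜ).indepNum < G.indepNum := by
  obtain ⟨t, ht⟩ := (G.induce (Q : Set V)ᶜ).exists_isNIndepSet_indepNum
  set S := t.map (Function.Embedding.subtype _)
  have hS : G.IsIndepSet (S : Set V) := by
    intro a ha b hb hab
    simp only [S, coe_map, Set.mem_image, mem_coe] at ha hb
    obtain ⟨a, ha, rfl⟩ := ha
    obtain ⟨b, hb, rfl⟩ := hb
    exact ht.isIndepSet ha hb (ne_of_apply_ne _ hab)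
  have hle : #S ≤ G.indepNum := hS.card_le_indepNum
  refine lt_of_le_of_ne (by simpa [S, ht.card_eq] using hle) fun heq => ?_
  obtain ⟨v, hv⟩ := hQ S ⟨hS, by simp [S, ht.card_eq, heq]⟩
  simp only [mem_inter, S, mem_map] at hv
  obtain ⟨hvQ, ⟨v, -, rfl⟩⟩ := hv
  exact v.2 hvQ

variable {h : V → ℕ} {A Q : Finset V}

/-- A proper colouring of the graph obtained by replacing each vertex `v` with a clique of `h v`
copies, recorded as its multiset of colour classes projected back to `V`. -/
structure IsWeightedColoring (G : SimpleGraph V) (h : V → ℕ) (𝒮 : Multiset (Finset V)) :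
    Prop where
  isIndepSet : ∀ S ∈ 𝒮, G.IsIndepSet (S : Set V)
  countP_mem : ∀ v, 𝒮.countP (v ∈ ·) = h v

noncomputable def maxCliqueWeight [Fintype V] (G : SimpleGraph V) (h : V → ℕ) : ℕ :=
  (univ.filter fun Q : Finset V => G.IsClique (Q : Set V)).sup fun Q => ∑ v ∈ Q, h v

section MaxCliqueWeight

variable [Fintype V]

lemma sum_le_maxCliqueWeight (hQ : G.IsClique (Q : Set V)) :
    ∑ v ∈ Q, h v ≤ G.maxCliqueWeight h :=
  le_sup (f := fun Q => ∑ v ∈ Q, h v) (by simpa using hQ)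

lemma maxCliqueWeight_le {n : ℕ}
    (H : ∀ Q : Finset V, G.IsClique (Q : Set V) → ∑ v ∈ Q, h v ≤ n) :
    G.maxCliqueWeight h ≤ n :=
  Finset.sup_le fun Q hQ => H Q (by simpa using hQ)

lemma maxCliqueWeight_lt {n : ℕ} (hn : 0 < n)
    (H : ∀ Q : Finset V, G.IsClique (Q : Set V) → ∑ v ∈ Q, h v < n) :
    G.maxCliqueWeight h < n :=
  (Finset.sup_lt_iff hn).mpr fun Q hQ => H Q (by simpa using hQ)

lemma maxCliqueWeight_mono {h' : V → ℕ} (hh : ∀ v, h v ≤ h' v) :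
    G.maxCliqueWeight h ≤ G.maxCliqueWeight h' :=
  maxCliqueWeight_le fun _ hQ => (sum_le_sum fun v _ => hh v).trans (sum_le_maxCliqueWeight hQ)

lemma cliqueNum_induce_le_maxCliqueWeight {T : Set V} (hT : ∀ v ∈ T, 1 ≤ h v) :
    (G.induce T).cliqueNum ≤ G.maxCliqueWeight h := by
  obtain ⟨s, hs⟩ := (G.induce T).exists_isNClique_cliqueNum
  rw [isNClique_induce_iff] at hs
  calc (G.induce T).cliqueNum = ∑ v ∈ s.map (.subtype _), 1 := by simp [hs.card_eq]
    _ ≤ ∑ v ∈ s.map (.subtype _), h v := sum_le_sum fun v hv => by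
        obtain ⟨v, -, rfl⟩ := mem_map.mp hv
        exact hT v v.2
    _ ≤ G.maxCliqueWeight h := sum_le_maxCliqueWeight hs.isClique

end MaxCliqueWeight

namespace IsWeightedColoring

variable {𝒮 : Multiset (Finset V)}

lemma pos_of_mem (hc : G.IsWeightedColoring h 𝒮) {S : Finset V} (hS : S ∈ 𝒮) {v : V}
    (hv : v ∈ S) : 0 < h v :=
  hc.countP_mem v ▸ Multiset.countP_pos.mpr ⟨S, hS, hv⟩

/-- A clique meets each independent set at most once. -/
lemma sum_eq_countP (hc : G.IsWeightedColoring h 𝒮) (hQ : G.IsClique (Q : Set V)) :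
    ∑ v ∈ Q, h v = 𝒮.countP fun S => (Q ∩ S).Nonempty := by
  have hind := hc.isIndepSet
  simp_rw [← hc.countP_mem, Multiset.sum_countP_mem_eq_sum_card_inter]
  clear hc
  induction 𝒮 using Multiset.induction with
  | empty => simp
  | cons S 𝒮 ih =>
    rw [Multiset.map_cons, Multiset.sum_cons, Multiset.countP_cons, add_comm,
      ih fun T hT => hind T (Multiset.mem_cons_of_mem hT)]
    have := hQ.card_inter_le_one (hind S (Multiset.mem_cons_self _ _))
    split_ifs with hne
    · have := hne.card_pos
      omega
    · simp_all [not_nonempty_iff_eq_empty]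

lemma sum_le_card (hc : G.IsWeightedColoring h 𝒮) (hQ : G.IsClique (Q : Set V)) :
    ∑ v ∈ Q, h v ≤ Multiset.card 𝒮 :=
  hc.sum_eq_countP hQ ▸ Multiset.countP_le_card _ _

lemma sum_lt_card (hc : G.IsWeightedColoring h 𝒮) (hQ : G.IsClique (Q : Set V)) (hA : A ∈ 𝒮)
    (hQA : Disjoint Q A) : ∑ v ∈ Q, h v < Multiset.card 𝒮 := by
  rw [hc.sum_eq_countP hQ, Multiset.card_eq_countP_add_countP fun S => (Q ∩ S).Nonempty]
  refine lt_add_of_pos_right _ (Multiset.countP_pos.mpr ⟨A, hA, ?_⟩)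
  rwa [not_nonempty_iff_eq_empty, ← disjoint_iff_inter_eq_empty]

lemma maxCliqueWeight_le_card [Fintype V] (hc : G.IsWeightedColoring h 𝒮) :
    G.maxCliqueWeight h ≤ Multiset.card 𝒮 :=
  maxCliqueWeight_le fun _ hQ => hc.sum_le_card hQ

lemma sum_le_card_mul_indepNum [Fintype V] (hc : G.IsWeightedColoring h 𝒮) :
    ∑ v, h v ≤ Multiset.card 𝒮 * G.indepNum := by
  simp_rw [← hc.countP_mem, Multiset.sum_countP_mem_eq_sum_card_inter, univ_inter]
  simpa using Multiset.sum_le_card_nsmul (𝒮.map card) G.indepNum fun n hn => by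
    obtain ⟨S, hS, rfl⟩ := Multiset.mem_map.mp hn
    exact (hc.isIndepSet S hS).card_le_indepNum

lemma cons (hc : G.IsWeightedColoring (fun v => h v - if v ∈ A then 1 else 0) 𝒮)
    (hA : G.IsIndepSet (A : Set V)) (hpos : ∀ v ∈ A, 1 ≤ h v) :
    G.IsWeightedColoring h (A ::ₘ 𝒮) where
  isIndepSet S hS := (Multiset.mem_cons.mp hS).elim (· ▸ hA) (hc.isIndepSet S)
  countP_mem v := by
    rw [Multiset.countP_cons, hc.countP_mem]
    exact Nat.sub_add_cancel (ite_mem_le_of_forall_mem_one_le hpos v)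

lemma filter_nonempty (hc : G.IsWeightedColoring h 𝒮) :
    G.IsWeightedColoring h (𝒮.filter (·.Nonempty)) where
  isIndepSet S hS := hc.isIndepSet S (Multiset.mem_of_mem_filter hS)
  countP_mem v := by
    rw [Multiset.countP_filter, ← hc.countP_mem]
    exact Multiset.countP_congr rfl fun S _ => propext ⟨And.left, fun hv => ⟨hv, v, hv⟩⟩

end IsWeightedColoring

variable [Fintype V]

lemma exists_isWeightedColoring_of_colorable {n : ℕ} (hh : ∀ v, h v ≤ 1)
    (hc : (G.induce {v | h v = 1}).Colorable n) :
    ∃ 𝒮, G.IsWeightedColoring h 𝒮 ∧ Multiset.card 𝒮 = n := by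
  obtain ⟨C⟩ := hc
  let colorClass (c : Fin n) : Finset V :=
    (univ.filter fun v : {v | h v = 1} => C v = c).map (.subtype _)
  have mem_colorClass {v : V} {c : Fin n} :
      v ∈ colorClass c ↔ ∃ hv : h v = 1, C ⟨v, hv⟩ = c := by
    simp [colorClass]
  refine ⟨univ.val.map colorClass, ⟨?_, fun v => ?_⟩, by simp⟩
  · simp only [Multiset.mem_map, mem_val, mem_univ, true_and]
    rintro _ ⟨c, rfl⟩ a ha b hb hab hadj
    obtain ⟨ha, hca⟩ := mem_colorClass.mp ha
    obtain ⟨hb, hcb⟩ := mem_colorClass.mp hb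
    exact C.valid (v := ⟨a, ha⟩) (w := ⟨b, hb⟩) hadj (hca.trans hcb.symm)
  · rw [Multiset.countP_map, ← Finset.filter_val, Finset.card_val]
    by_cases hv : h v = 1
    · rw [hv, card_eq_one]
      exact ⟨C ⟨v, hv⟩, by ext c; simp [mem_colorClass, hv, eq_comm]⟩
    · rw [card_eq_zero.mpr (by ext c; simp [mem_colorClass, hv])]
      have := hh v
      omega

/-- A clique of maximum `h`-weight avoiding `v₀` keeps its weight when `h` is lowered at `v₀`, so
it meets each of the `maxCliqueWeight G h` classes of `𝒮`, `A` included. -/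
lemma maxCliqueWeight_sub_ite_mem_lt {v₀ : V} {𝒮 : Multiset (Finset V)}
    (hc : G.IsWeightedColoring (fun v => h v - if v ∈ ({v₀} : Finset V) then 1 else 0) 𝒮)
    (hcard : Multiset.card 𝒮 = G.maxCliqueWeight h) (hA : A ∈ 𝒮) (hv₀ : v₀ ∈ A)
    (hpos : ∀ v ∈ A, 1 ≤ h v) :
    G.maxCliqueWeight (fun v => h v - if v ∈ A then 1 else 0) < G.maxCliqueWeight h := by
  refine maxCliqueWeight_lt (hcard ▸ Multiset.card_pos_iff_exists_mem.mpr ⟨A, hA⟩) fun Q hQ => ?_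
  have hsub := sum_sub_ite_mem_add_card_inter hpos Q
  rcases (Q ∩ A).eq_empty_or_nonempty with hQA | hQA
  · have hv₀Q : Q ∩ {v₀} = ∅ := by
      rw [← subset_empty, ← hQA]
      exact inter_subset_inter_left (singleton_subset_iff.mpr hv₀)
    have hsub₀ := sum_sub_ite_mem_add_card_inter (A := {v₀}) (h := h)
      (fun v hv => mem_singleton.mp hv ▸ hpos v₀ hv₀) Q
    have := hc.sum_lt_card hQ hA (disjoint_iff_inter_eq_empty.mpr hQA)
    rw [hQA, card_empty] at hsub
    rw [hv₀Q, card_empty] at hsub₀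
    omega
  · have := sum_le_maxCliqueWeight (h := h) hQ
    have := hQA.card_pos
    omega

end SimpleGraph

namespace IsPerfect

open SimpleGraph

variable {V : Type*} {G : SimpleGraph V}

lemma induce [Finite V] (hG : IsPerfect G) (s : Set V) : IsPerfect (G.induce s) := by
  intro T
  let e := ((Embedding.induce (G := G) s).comp (Embedding.induce T)).isoInduceRange
  rw [chromaticNumber_congr e, e.cliqueNum_eq]
  exact hG _

lemma colorable_induce (hG : IsPerfect G) (T : Set V) :
    (G.induce T).Colorable (G.induce T).cliqueNum := by
  rw [← chromaticNumber_le_iff_colorable, hG T]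

variable [Fintype V] {h : V → ℕ}

/-- Lovász's replication step: lower the weight of `v₀` and colour; either one colour is to spare
and `{v₀}` becomes a new class, or a class through `v₀` meets every clique of maximum weight and
can be peeled off. -/
lemma exists_isWeightedColoring_of_two_le {v₀ : V} (hv₀ : 2 ≤ h v₀)
    (ih : ∀ h' : V → ℕ, ∑ v, h' v < ∑ v, h v →
      ∃ 𝒮, G.IsWeightedColoring h' 𝒮 ∧ Multiset.card 𝒮 ≤ G.maxCliqueWeight h') :
    ∃ 𝒮, G.IsWeightedColoring h 𝒮 ∧ Multiset.card 𝒮 ≤ G.maxCliqueWeight h := by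
  have hpos₀ : ∀ v ∈ ({v₀} : Finset V), 1 ≤ h v := fun v hv => mem_singleton.mp hv ▸ by omega
  obtain ⟨𝒮, hc, hcard⟩ := ih _ (sum_sub_ite_mem_lt hpos₀ (singleton_nonempty v₀))
  have hle : Multiset.card 𝒮 ≤ G.maxCliqueWeight h :=
    hcard.trans (maxCliqueWeight_mono fun v => Nat.sub_le _ _)
  rcases hle.lt_or_eq with hlt | heq
  · exact ⟨{v₀} ::ₘ 𝒮, hc.cons (by simp) hpos₀, by simpa using hlt⟩
  obtain ⟨A, hA, hv₀A⟩ : ∃ A ∈ 𝒮, v₀ ∈ A :=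
    Multiset.countP_pos.mp (hc.countP_mem v₀ ▸ by simp; omega)
  have hpos : ∀ v ∈ A, 1 ≤ h v := fun v hv => (hc.pos_of_mem hA hv).trans_le (Nat.sub_le _ _)
  obtain ⟨𝒮', hc', hcard'⟩ := ih _ (sum_sub_ite_mem_lt hpos ⟨v₀, hv₀A⟩)
  have := maxCliqueWeight_sub_ite_mem_lt hc heq hA hv₀A hpos
  exact ⟨A ::ₘ 𝒮', hc'.cons (hc.isIndepSet A hA) hpos, by rw [Multiset.card_cons]; omega⟩

theorem exists_isWeightedColoring (hG : IsPerfect G) (h : V → ℕ) :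
    ∃ 𝒮, G.IsWeightedColoring h 𝒮 ∧ Multiset.card 𝒮 ≤ G.maxCliqueWeight h := by
  induction hn : ∑ v, h v using Nat.strong_induction_on generalizing h with
  | _ n ih =>
    by_cases hh : ∀ v, h v ≤ 1
    · obtain ⟨𝒮, hc, hcard⟩ := exists_isWeightedColoring_of_colorable hh (hG.colorable_induce _)
      exact ⟨𝒮, hc, hcard.trans_le (cliqueNum_induce_le_maxCliqueWeight fun v hv => hv.ge)⟩
    · obtain ⟨v₀, hv₀⟩ := not_forall.mp hh
      exact exists_isWeightedColoring_of_two_le (not_le.mp hv₀) fun h' hlt => ih _ (hn ▸ hlt) h' rfl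

/-- Otherwise the weights `h v = #{maximum independent sets containing v}` would have maximum
clique weight below the number `m` of maximum independent sets, so fewer than `m` independent sets
would carry the total weight `m * G.indepNum`. -/
theorem exists_isClique_forall_isNIndepSet_inter_nonempty [Nonempty V] (hG : IsPerfect G) :
    ∃ Q : Finset V, G.IsClique (Q : Set V) ∧
      ∀ S : Finset V, G.IsNIndepSet G.indepNum S → (Q ∩ S).Nonempty := by
  by_contra! hcon
  set M := G.indepSetFinset G.indepNum
  have hM : G.IsWeightedColoring (fun v => M.val.countP (v ∈ ·)) M.val :=
    ⟨fun S hS => (mem_indepSetFinset_iff.mp hS).isIndepSet, fun _ => rfl⟩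
  obtain ⟨S₀, hS₀⟩ := G.exists_isNIndepSet_indepNum
  have hcw : G.maxCliqueWeight (fun v => M.val.countP (v ∈ ·)) < #M := by
    refine maxCliqueWeight_lt (card_pos.mpr ⟨S₀, mem_indepSetFinset_iff.mpr hS₀⟩) fun Q hQ => ?_
    obtain ⟨S, hS, hQS⟩ := hcon Q hQ
    exact hM.sum_lt_card hQ (mem_indepSetFinset_iff.mpr hS) (disjoint_iff_inter_eq_empty.mpr hQS)
  obtain ⟨𝒮, h𝒮, hcard⟩ := hG.exists_isWeightedColoring fun v => M.val.countP (v ∈ ·)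
  have htotal : ∑ v, M.val.countP (v ∈ ·) = #M * G.indepNum := by
    simp_rw [Multiset.sum_countP_mem_eq_sum_card_inter, univ_inter]
    rw [← sum_eq_multiset_sum, sum_const_nat fun S hS => (mem_indepSetFinset_iff.mp hS).card_eq]
  have hα : 0 < G.indepNum := by
    obtain ⟨v⟩ := ‹Nonempty V›
    exact (show G.IsIndepSet ({v} : Finset V) by simp [isIndepSet_iff]).card_le_indepNum
  have := h𝒮.sum_le_card_mul_indepNum
  have := Nat.mul_lt_mul_of_pos_right (hcard.trans_lt hcw) hα
  omega

/-- Remove a clique meeting every maximum independent set; it becomes one new colour. -/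
theorem colorable_compl (hG : IsPerfect G) : Gᶜ.Colorable G.indepNum := by
  induction hn : Fintype.card V using Nat.strong_induction_on generalizing V with
  | _ n ih =>
    cases isEmpty_or_nonempty V
    · exact Colorable.of_isEmpty _
    obtain ⟨Q, hQ, hmeet⟩ := hG.exists_isClique_forall_isNIndepSet_inter_nonempty
    obtain ⟨S, hS⟩ := G.exists_isNIndepSet_indepNum
    obtain ⟨v, hv⟩ := hmeet S hS
    have hlt : Fintype.card ↥(Q : Set V)ᶜ < n :=
      hn ▸ Fintype.card_subtype_lt (p := (· ∈ (Q : Set V)ᶜ)) (x := v)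
        (by simp [(mem_inter.mp hv).1])
    have hc := ih _ hlt (hG.induce _) rfl
    rw [← induce_compl] at hc
    exact (colorable_succ_of_isIndepSet (G.isIndepSet_compl.mpr hQ) hc).mono
      (indepNum_induce_compl_lt hmeet)

theorem compl (hG : IsPerfect G) : IsPerfect Gᶜ := by
  intro T
  rw [induce_compl, cliqueNum_compl]
  refine le_antisymm (hG.induce T).colorable_compl.chromaticNumber_le ?_
  simpa using cliqueNum_le_chromaticNumber (G := (G.induce T)ᶜ)

end IsPerfect

lemma stableWorthNat_eq_maxCliqueWeight_compl {V : Type*} [Fintype V] (G : SimpleGraph V)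
    (w : V → ℕ) : stableWorthNat G w = Gᶜ.maxCliqueWeight w := by
  refine le_antisymm (csSup_le ⟨0, ∅, by simp [IsStableSet], by simp⟩ ?_) ?_
  · rintro _ ⟨S, hS, rfl⟩
    exact SimpleGraph.sum_le_maxCliqueWeight (G.isClique_compl.mpr hS)
  · refine SimpleGraph.maxCliqueWeight_le fun Q hQ => le_csSup ⟨∑ v, w v, ?_⟩
      ⟨Q, G.isClique_compl.mp hQ, rfl⟩
    rintro _ ⟨S, -, rfl⟩
    exact sum_le_sum_of_subset (subset_univ S)

theorem perfect_graph_clique_system_TDI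
    {V : Type*} [Fintype V] (G : SimpleGraph V) (hG : IsPerfect G) (w : V → ℕ) :
    ∃ y : Finset V → ℕ,
      (∀ v : V, w v ≤ ∑ Q ∈ (cliquesOf G).filter (fun Q => v ∈ Q), y Q) ∧
      ∑ Q ∈ cliquesOf G, y Q = stableWorthNat G w := by
  obtain ⟨𝒮, hc, hcard⟩ := hG.compl.exists_isWeightedColoring w
  have hc' := hc.filter_nonempty
  have hmem : ∀ Q ∈ 𝒮.filter (·.Nonempty), Q ∈ cliquesOf G := fun Q hQ => by
    have hclique := G.isIndepSet_compl.mp (hc'.isIndepSet Q hQ)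
    simp [cliquesOf, (Multiset.mem_filter.mp hQ).2, hclique]
  refine ⟨fun Q => (𝒮.filter (·.Nonempty)).count Q, fun v => ?_, ?_⟩
  · exact ((Multiset.sum_filter_count_eq_countP hmem _).trans (hc'.countP_mem v)).ge
  · rw [Multiset.sum_count_eq_card hmem, stableWorthNat_eq_maxCliqueWeight_compl]
    exact le_antisymm ((Multiset.card_le_card (Multiset.filter_le _ _)).trans hcard)
      hc'.maxCliqueWeight_le_card
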